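/- arXiv:0804.3073 — 6 statements merged into one kernel-verified Lean document; each statement's English description precedes it below -/
import Mathlib

section
/- If b is an even function on the unit circle (b = b̃), then (T(a) + H(a))(T(b) + H(b)) = T(ab) + H(ab) for any bounded a. -/
/-- The product symbol: the Fourier coefficients of `a*b` are the convolution
of those of `a` and `b`. -/
noncomputable def conv (a b : ℤ → ℂ) : ℤ → ℂ := fun n => ∑' k : ℤ, a k * b (n - k)

/-- The Toeplitz matrix `(a_{j-k})_{j,k ≥ 0}` of a symbol given by its Fourier coefficients. -/
def Tmat (a : ℤ → ℂ) : ℕ → ℕ → ℂ := fun j k => a ((j : ℤ) - (k : ℤ))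

/-- The Hankel matrix `(a_{j+k+1})_{j,k ≥ 0}`. -/
def Hmat (a : ℤ → ℂ) : ℕ → ℕ → ℂ := fun j k => a ((j : ℤ) + (k : ℤ) + 1)

/-- The flip `ã(e^{iθ}) = a(e^{-iθ})`, on the level of Fourier coefficients. -/
def flip' (a : ℤ → ℂ) : ℤ → ℂ := fun n => a (-n)

/-- Product of infinite matrices (entrywise, via absolutely convergent series). -/
noncomputable def mulM (A B : ℕ → ℕ → ℂ) : ℕ → ℕ → ℂ := fun j k => ∑' i : ℕ, A j i * B i k

set_option maxHeartbeats 2000000 in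
/-- For even `b`: `(T(a)+H(a))(T(b)+H(b)) = T(ab)+H(ab)`. -/
theorem M_plus_multiplicative (a b : ℤ → ℂ)
    (ha : Summable fun n => ‖a n‖) (hb : Summable fun n => ‖b n‖)
    (hbe : ∀ n : ℤ, b (-n) = b n) :
    ∀ j k : ℕ, mulM (fun j k => Tmat a j k + Hmat a j k)
        (fun j k => Tmat b j k + Hmat b j k) j k
      = Tmat (conv a b) j k + Hmat (conv a b) j k := by
  intro j k
  have hB : ∀ n : ℤ, ‖b n‖ ≤ ∑' m, ‖b m‖ := fun n => Summable.le_tsum hb n (fun _ _ => norm_nonneg _)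
  have key : ∀ (φ ψ : ℕ → ℤ), Function.Injective φ →
      Summable (fun i : ℕ => a (φ i) * b (ψ i)) := by
    intro φ ψ hφ
    apply Summable.of_norm
    apply Summable.of_nonneg_of_le (fun i => norm_nonneg _) (fun i => ?_)
      ((ha.comp_injective hφ).mul_right (∑' m, ‖b m‖))
    rw [norm_mul]
    exact mul_le_mul_of_nonneg_left (hB _) (norm_nonneg _)
  have injsub : Function.Injective (fun i : ℕ => (j : ℤ) - i) := by
    intro x y h; simp only at h; omega
  have injadd : Function.Injective (fun i : ℕ => (j : ℤ) + i + 1) := by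
    intro x y h; simp only at h; omega
  have h1 := (key _ (fun i : ℕ => (i : ℤ) - k) injsub).hasSum
  have h2 := (key _ (fun i : ℕ => (i : ℤ) + k + 1) injsub).hasSum
  have h3 := (key _ (fun i : ℕ => (i : ℤ) + k + 1) injadd).hasSum
  have h4 := (key _ (fun i : ℕ => (i : ℤ) - k) injadd).hasSum
  set s1 := ∑' i : ℕ, a ((j : ℤ) - i) * b ((i : ℤ) - k) with hs1
  set s2 := ∑' i : ℕ, a ((j : ℤ) - i) * b ((i : ℤ) + k + 1) with hs2
  set s3 := ∑' i : ℕ, a ((j : ℤ) + i + 1) * b ((i : ℤ) + k + 1) with hs3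
  set s4 := ∑' i : ℕ, a ((j : ℤ) + i + 1) * b ((i : ℤ) - k) with hs4
  -- conv at j - k
  have hc1 : conv a b ((j : ℤ) - k) = s1 + s3 := by
    have hint : HasSum (fun i : ℤ => a ((j : ℤ) - i) * b (i - k)) (s1 + s3) := by
      apply HasSum.of_nat_of_neg_add_one h1
      convert h3 using 2 with n
      have e1 : (j : ℤ) - (-((n : ℤ) + 1)) = (j : ℤ) + n + 1 := by ring
      have e2 : (-((n : ℤ) + 1)) - k = -((n : ℤ) + k + 1) := by ring
      rw [e1, e2, hbe]
    have := ((Equiv.subLeft (j : ℤ)).hasSum_iff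
      (f := fun m : ℤ => a m * b ((j : ℤ) - k - m)) (a := s1 + s3)).mp ?_
    · exact this.tsum_eq
    · convert hint using 2 with i
      simp only [Function.comp, Equiv.subLeft_apply]
      congr 1
      ring
  -- conv at j + k + 1
  have hc2 : conv a b ((j : ℤ) + k + 1) = s2 + s4 := by
    have hint : HasSum (fun i : ℤ => a ((j : ℤ) - i) * b (i + k + 1)) (s2 + s4) := by
      apply HasSum.of_nat_of_neg_add_one h2
      convert h4 using 2 with n
      have e1 : (j : ℤ) - (-((n : ℤ) + 1)) = (j : ℤ) + n + 1 := by ring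
      have e2 : (-((n : ℤ) + 1)) + k + 1 = -((n : ℤ) - k) := by ring
      rw [e1, e2, hbe]
    have := ((Equiv.subLeft (j : ℤ)).hasSum_iff
      (f := fun m : ℤ => a m * b ((j : ℤ) + k + 1 - m)) (a := s2 + s4)).mp ?_
    · exact this.tsum_eq
    · convert hint using 2 with i
      simp only [Function.comp, Equiv.subLeft_apply]
      congr 1
      ring
  have hL : mulM (fun j k => Tmat a j k + Hmat a j k)
      (fun j k => Tmat b j k + Hmat b j k) j k = (s1 + s2) + (s4 + s3) := by
    apply HasSum.tsum_eq
    convert (h1.add h2).add (h4.add h3) using 2 with i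
    simp only [Tmat, Hmat]
    ring
  rw [hL]
  simp only [Tmat, Hmat, hc1, hc2]
  ring
end

section
/- If b is an even function on the unit circle, then (T(a) − H(a))(T(b) − H(b)) = T(ab) − H(ab) for any bounded a. -/
/-!
Write `β n = b (n - k) - b (n + k + 1)` for the `k`-th column of `T(b) - H(b)`, extended to all
`n : ℤ`. Evenness of `b` makes `β` odd about `-1/2`, i.e. `β (-(n+1)) = -β n`, so folding the
full sum `∑_{n ∈ ℤ} a_{j-n} β n` onto `n ≥ 0` produces exactly the row `a_{j-n} - a_{j+n+1}` of
`T(a) - H(a)`. On the other hand the full sum is a reindexed difference of two convolutions,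
`(ab)_{j-k} - (ab)_{j+k+1}`.
-/

theorem Summable.mul_of_norm_le {ι R : Type*} [NormedRing R] [CompleteSpace R] {f g : ι → R}
    (hf : Summable fun i => ‖f i‖) {C : ℝ} (hg : ∀ i, ‖g i‖ ≤ C) :
    Summable fun i => f i * g i :=
  .of_norm_bounded (hf.mul_right C) fun i =>
    (norm_mul_le _ _).trans (mul_le_mul_of_nonneg_left (hg i) (norm_nonneg _))

theorem tsum_int_mul_eq_tsum_nat_of_neg_add_one {R : Type*} [Ring R] [TopologicalSpace R]
    [IsTopologicalAddGroup R] [T2Space R] {α β : ℤ → R} (h : Summable fun n => α n * β n)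
    (hβ : ∀ n : ℕ, β (-(n + 1)) = -β n) :
    ∑' n : ℤ, α n * β n = ∑' n : ℕ, (α n - α (-(n + 1))) * β n := by
  rw [← tsum_nat_add_neg_add_one h]
  congr 1 with n
  rw [hβ, sub_mul, mul_neg, sub_eq_add_neg]

theorem conv_add_eq_tsum (a b : ℤ → ℂ) (j p : ℤ) :
    conv a b (j + p) = ∑' n : ℤ, a (j - n) * b (n + p) := by
  rw [conv, ← (Equiv.subLeft j).tsum_eq]
  congr 1 with n
  simp only [Equiv.subLeft_apply]
  ring_nf

/-- For even `b`: `(T(a)-H(a))(T(b)-H(b)) = T(ab)-H(ab)`. -/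
theorem M_minus_multiplicative (a b : ℤ → ℂ)
    (ha : Summable fun n => ‖a n‖) (hb : Summable fun n => ‖b n‖)
    (hbe : ∀ n : ℤ, b (-n) = b n) :
    ∀ j k : ℕ, mulM (fun j k => Tmat a j k - Hmat a j k)
        (fun j k => Tmat b j k - Hmat b j k) j k
      = Tmat (conv a b) j k - Hmat (conv a b) j k := by
  intro j k
  have hsum : ∀ p : ℤ, Summable fun n : ℤ => a (j - n) * b (n + p) := fun p =>
    (ha.comp_injective (Equiv.subLeft (j : ℤ)).injective).mul_of_norm_le
      fun n => hb.le_tsum _ fun _ _ => norm_nonneg _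
  have hsub : Summable fun n : ℤ => a (j - n) * (b (n + -k) - b (n + (k + 1))) := by
    simpa only [mul_sub] using (hsum _).sub (hsum _)
  have hodd : ∀ n : ℕ, b (-(n + 1 : ℤ) + -k) - b (-(n + 1 : ℤ) + (k + 1)) =
      -(b (n + -k) - b (n + (k + 1))) := fun n => by
    rw [← hbe (-(n + 1 : ℤ) + -k), ← hbe (-(n + 1 : ℤ) + (k + 1))]
    ring_nf
  calc mulM _ _ j k
      = ∑' n : ℕ, (a (j - n) - a (j - -(n + 1 : ℤ))) * (b (n + -k) - b (n + (k + 1))) := by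
        refine tsum_congr fun n => ?_
        simp only [Tmat, Hmat]
        ring_nf
    _ = ∑' n : ℤ, a (j - n) * (b (n + -k) - b (n + (k + 1))) :=
        (tsum_int_mul_eq_tsum_nat_of_neg_add_one hsub hodd).symm
    _ = conv a b (j + -k) - conv a b (j + (k + 1)) := by
        rw [conv_add_eq_tsum, conv_add_eq_tsum, ← (hsum _).tsum_sub (hsum _)]
        simp only [mul_sub]
    _ = _ := by simp only [Tmat, Hmat, sub_eq_add_neg, add_assoc]
end

section
/- If b is even, then (T(a) − H(t^{-1}a))(T(b) − H(t^{-1}b)) = T(ab) − H(t^{-1}ab), where t denotes the identity function t(e^{iθ}) = e^{iθ}. -/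
/-- The Hankel matrix `H(t⁻¹ a) = (a_{j+k+2})_{j,k ≥ 0}`. -/
def HmatShift (a : ℤ → ℂ) : ℕ → ℕ → ℂ := fun j k => a ((j : ℤ) + (k : ℤ) + 2)

/-- For even `b`: `(T(a)-H(t⁻¹a))(T(b)-H(t⁻¹b)) = T(ab)-H(t⁻¹ab)`. -/
theorem M_III_multiplicative (a b : ℤ → ℂ)
    (ha : Summable fun n => ‖a n‖) (hb : Summable fun n => ‖b n‖)
    (hbe : ∀ n : ℤ, b (-n) = b n) :
    ∀ j k : ℕ, mulM (fun j k => Tmat a j k - HmatShift a j k)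
        (fun j k => Tmat b j k - HmatShift b j k) j k
      = Tmat (conv a b) j k - HmatShift (conv a b) j k := by
  intro j k
  -- basic summability
  have S1 : ∀ n : ℤ, Summable (fun m : ℤ => a m * b (n - m)) := by
    intro n
    apply Summable.of_norm
    apply Summable.of_nonneg_of_le (fun m => norm_nonneg _) _ (ha.mul_right (∑' l, ‖b l‖))
    intro m
    rw [norm_mul]
    exact mul_le_mul_of_nonneg_left (Summable.le_tsum hb _ (fun _ _ => norm_nonneg _)) (norm_nonneg _)
  set g : ℤ → ℂ := fun i => a ((j : ℤ) - i) * (b (i - (k : ℤ)) - b (i + (k : ℤ) + 2)) with hg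
  have hsum2 : Summable (fun m : ℤ =>
      a m * b ((j : ℤ) - (k : ℤ) - m) - a m * b ((j : ℤ) + (k : ℤ) + 2 - m)) :=
    (S1 _).sub (S1 _)
  have hFg : ∀ i : ℤ,
      a ((j:ℤ) - i) * b ((j:ℤ) - (k:ℤ) - ((j:ℤ) - i)) -
        a ((j:ℤ) - i) * b ((j:ℤ) + (k:ℤ) + 2 - ((j:ℤ) - i)) = g i := by
    intro i
    have h1 : (j:ℤ) - (k:ℤ) - ((j:ℤ) - i) = i - (k:ℤ) := by ring
    have h2 : (j:ℤ) + (k:ℤ) + 2 - ((j:ℤ) - i) = i + (k:ℤ) + 2 := by ring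
    rw [h1, h2]; simp only [hg]; ring
  have hgsum : Summable g := by
    have h := hsum2.comp_injective (Equiv.subLeft (j:ℤ)).injective
    exact h.congr (fun i => hFg i)
  -- the ℤ-sum of g equals the convolution difference
  have hconv : conv a b ((j:ℤ) - (k:ℤ)) - conv a b ((j:ℤ) + (k:ℤ) + 2) = ∑' i : ℤ, g i := by
    unfold conv
    rw [← Summable.tsum_sub (S1 _) (S1 _)]
    rw [← (Equiv.subLeft (j:ℤ)).tsum_eq
      (fun m => a m * b ((j:ℤ) - (k:ℤ) - m) - a m * b ((j:ℤ) + (k:ℤ) + 2 - m))]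
    exact tsum_congr (fun i => hFg i)
  -- summability on the pieces
  have hg1 : Summable (fun n : ℕ => g (n : ℤ)) :=
    hgsum.comp_injective (fun x y h => by exact_mod_cast h)
  have hg2 : Summable (fun n : ℕ => g (-(n : ℤ) - 1)) := by
    apply hgsum.comp_injective
    intro x y hxy
    simp only at hxy
    omega
  have hg3 : Summable (fun n : ℕ => g (-(n : ℤ) - 2)) := by
    apply hgsum.comp_injective
    intro x y hxy
    simp only at hxy
    omega
  -- split the ℤ-sum
  have hfun : (fun n : ℕ => g (-(n.succ : ℤ))) = (fun n : ℕ => g (-(n : ℤ) - 1)) := by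
    funext n; congr 1; push_cast; ring
  have hsplit : (∑' i : ℤ, g i) = (∑' n : ℕ, g (n : ℤ)) + ∑' n : ℕ, g (-(n : ℤ) - 1) := by
    have h2 : HasSum (fun n : ℕ => g (-(n.succ : ℤ))) (∑' n : ℕ, g (-(n : ℤ) - 1)) := by
      rw [hfun]; exact hg2.hasSum
    exact (hg1.hasSum.of_nat_of_neg_add_one h2).tsum_eq
  -- shift the negative part; the first term vanishes by evenness
  have hgm1 : g (-1) = 0 := by
    have e1 : (-1 : ℤ) - (k : ℤ) = -((k:ℤ) + 1) := by ring
    have e2 : (-1 : ℤ) + (k : ℤ) + 2 = (k:ℤ) + 1 := by ring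
    rw [hg]
    simp only [e1, e2, hbe ((k:ℤ) + 1)]
    ring
  have hshift : (∑' n : ℕ, g (-(n : ℤ) - 1)) = ∑' n : ℕ, g (-(n : ℤ) - 2) := by
    rw [Summable.tsum_eq_zero_add hg2]
    rw [show (-((0:ℕ):ℤ) - 1 : ℤ) = -1 by norm_num, hgm1, zero_add]
    apply tsum_congr
    intro n
    congr 1
    push_cast
    ring
  -- identify the entries
  have hfi : ∀ i : ℕ, (Tmat a j i - HmatShift a j i) * (Tmat b i k - HmatShift b i k)
      = g (i : ℤ) + g (-(i : ℤ) - 2) := by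
    intro i
    simp only [Tmat, HmatShift, hg]
    have e1 : (j:ℤ) - (-(i:ℤ) - 2) = (j:ℤ) + (i:ℤ) + 2 := by ring
    have e2 : (-(i:ℤ) - 2) - (k:ℤ) = -((i:ℤ) + (k:ℤ) + 2) := by ring
    have e3 : (-(i:ℤ) - 2) + (k:ℤ) + 2 = -((i:ℤ) - (k:ℤ)) := by ring
    rw [e1, e2, e3, hbe, hbe]
    ring
  -- conclude
  show (∑' i : ℕ, (Tmat a j i - HmatShift a j i) * (Tmat b i k - HmatShift b i k)) = _
  rw [tsum_congr hfi, Summable.tsum_add hg1 hg3, ← hshift, ← hsplit, ← hconv]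
  rfl
end

section
/- If b is even, then (T(a) + H(ta)Q₁)(T(b) + H(tb)Q₁) = T(ab) + H(t·ab)Q₁, where Q₁ = I − P₁ and P₁ is the projection onto the 0th coordinate of ℓ². -/
/-- The matrix of `T(a) + H(t a) Q₁`, where `H(ta) = (a_{j+k})` and
`Q₁ = I - P₁` kills the 0th column. -/
def MIV (a : ℤ → ℂ) : ℕ → ℕ → ℂ :=
  fun j k => Tmat a j k + (if k = 0 then 0 else a ((j : ℤ) + (k : ℤ)))

/-!
For an even sequence `c`, row `j` of `T(a) + H(ta)Q₁` pairs with `c` like the full bi-infinite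
row `(a_{j-m})_{m ∈ ℤ}`: the Hankel entry `a_{j+i}`, `i > 0`, stands in for `a_{j-m}` at `m = -i`,
where `c_m = c_i`. Column `k` of `T(b) + H(tb)Q₁` is `c_m = b_{m-k} + [k > 0] b_{m+k}`, which is
even when `b` is, so entry `(j, k)` of the product is
`∑_{m ∈ ℤ} a_{j-m} (b_{m-k} + [k > 0] b_{m+k}) = (ab)_{j-k} + [k > 0] (ab)_{j+k}`.
-/
theorem summable_mul_shift {a b : ℤ → ℂ} {C : ℝ} (ha : Summable fun n => ‖a n‖)
    (hb : ∀ n, ‖b n‖ ≤ C) (p q : ℤ) :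
    Summable fun m => a (p - m) * b (m + q) := by
  refine .of_norm_bounded (((Equiv.subLeft p).summable_iff.mpr ha).mul_right C) fun m => ?_
  rw [norm_mul]
  exact mul_le_mul_of_nonneg_left (hb _) (norm_nonneg _)

theorem tsum_mul_shift_eq_conv (a b : ℤ → ℂ) (p q : ℤ) :
    ∑' m, a (p - m) * b (m + q) = conv a b (p + q) := by
  rw [conv, ← (Equiv.subLeft p).tsum_eq]
  exact tsum_congr fun m => by simp only [Equiv.subLeft_apply]; ring_nf

theorem hasSum_mul_shift_conv {a b : ℤ → ℂ} {C : ℝ} (ha : Summable fun n => ‖a n‖)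
    (hb : ∀ n, ‖b n‖ ≤ C) (p q : ℤ) :
    HasSum (fun m => a (p - m) * b (m + q)) (conv a b (p + q)) :=
  tsum_mul_shift_eq_conv a b p q ▸ (summable_mul_shift ha hb p q).hasSum

theorem hasSum_MIV_mul_even {a c : ℤ → ℂ} (hc : ∀ m, c (-m) = c m) (j : ℕ) {S : ℂ}
    (hS : HasSum (fun m : ℤ => a (j - m) * c m) S) :
    HasSum (fun i : ℕ => MIV a j i * c i) S := by
  have h := hS.nat_add_neg.sub (hasSum_ite_eq (0 : ℕ) (a j * c 0))
  simp only [sub_zero, add_sub_cancel_right] at h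
  refine h.congr_fun fun i => ?_
  rcases eq_or_ne i 0 with rfl | hi
  · simp [MIV, Tmat]
  · simp only [MIV, Tmat, if_neg hi, hc, sub_neg_eq_add, sub_zero]
    ring

/-- For even `b`: `(T(a)+H(ta)Q₁)(T(b)+H(tb)Q₁) = T(ab)+H(t·ab)Q₁`. -/
theorem M_IV_multiplicative (a b : ℤ → ℂ)
    (ha : Summable fun n => ‖a n‖) (hb : Summable fun n => ‖b n‖)
    (hbe : ∀ n : ℤ, b (-n) = b n) :
    ∀ j k : ℕ, mulM (MIV a) (MIV b) j k = MIV (conv a b) j k := by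
  intro j k
  have hbC : ∀ n, ‖b n‖ ≤ ∑' m, ‖b m‖ := fun n => hb.le_tsum n fun _ _ => norm_nonneg _
  set c : ℤ → ℂ := fun m => b (m - k) + if k = 0 then 0 else b (m + k)
  have hc : ∀ m, c (-m) = c m := by
    intro m
    rcases eq_or_ne k 0 with rfl | hk
    · simp [c, hbe]
    · simp only [c, if_neg hk, ← hbe (-m - k), ← hbe (-m + k)]
      ring_nf
  have hrow : HasSum (fun m : ℤ => a (j - m) * c m) (MIV (conv a b) j k) := by
    rcases eq_or_ne k 0 with rfl | hk
    · simpa [c, MIV, Tmat] using hasSum_mul_shift_conv ha hbC j 0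
    · simpa [c, MIV, Tmat, hk, mul_add, sub_eq_add_neg] using
        (hasSum_mul_shift_conv ha hbC j (-k)).add (hasSum_mul_shift_conv ha hbC j k)
  exact (hasSum_MIV_mul_even hc j hrow).tsum_eq
end

section
/- Let M be linear on trigonometric polynomials with M(ab) = T(a)M(b) for all anti-analytic trigonometric polynomials a (a_n = 0 for n > 0), and M(1) = I. Then K(a) := M(a) − T(a) satisfies: the matrix entry ⟨K(t^n)e_i, e_j⟩ = 0 whenever j ≥ n; in particular K(t) has rank at most one, with range contained in the span of e₀. -/
/-- Let `M` assign to each trigonometric polynomial symbol an infinite matrix, linearly,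
with `M(ab) = T(a)M(b)` whenever `a` is an anti-analytic trigonometric polynomial,
and `M(1) = I`. Then `K(tⁿ) = M(tⁿ) - T(tⁿ)` has `⟨K(tⁿ)eᵢ, eⱼ⟩ = 0` for `j ≥ n`;
in particular `K(t)` vanishes outside row `0`, so it has rank at most one with range
in the span of `e₀`. -/
theorem K_entries_vanish (M : (ℤ → ℂ) → (ℕ → ℕ → ℂ))
    (hadd : ∀ a b : ℤ → ℂ, M (a + b) = M a + M b)
    (hsmul : ∀ (z : ℂ) (a : ℤ → ℂ), M (z • a) = z • M a)
    (hmul : ∀ a b : ℤ → ℂ, (Function.support a).Finite → (Function.support b).Finite →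
      (∀ n : ℤ, 0 < n → a n = 0) → M (conv a b) = mulM (Tmat a) (M b))
    (hone : M (fun m => if m = 0 then 1 else 0) = fun j k => if j = k then 1 else 0) :
    (∀ n i j : ℕ, n ≤ j →
      M (fun m => if m = (n : ℤ) then 1 else 0) j i
        - Tmat (fun m => if m = (n : ℤ) then 1 else 0) j i = 0) ∧
    (∀ i j : ℕ, 1 ≤ j →
      M (fun m => if m = (1 : ℤ) then 1 else 0) j i
        - Tmat (fun m => if m = (1 : ℤ) then 1 else 0) j i = 0) := by

  have hdelta_fin : ∀ n : ℤ, (Function.support (fun m => if m = n then (1:ℂ) else 0)).Finite := by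
    intro n
    apply Set.Finite.subset (Set.finite_singleton n)
    intro m hm
    simp only [Function.mem_support, ne_eq, ite_eq_right_iff, not_forall] at hm
    exact hm.1
  -- shift relation
  have hshift : ∀ (n : ℤ) (j k : ℕ),
      M (fun m => if m = n - 1 then 1 else 0) j k
        = M (fun m => if m = n then 1 else 0) (j + 1) k := by
    intro n j k
    have hc : conv (fun m => if m = (-1:ℤ) then 1 else 0)
        (fun m => if m = n then 1 else 0) = fun m => if m = n - 1 then 1 else 0 := by
      funext m
      simp only [conv]
      rw [tsum_eq_single (-1 : ℤ)]
      · simp only [if_pos rfl, one_mul, sub_neg_eq_add]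
        by_cases h : m + 1 = n
        · have h2 : m = n - 1 := by omega
          rw [if_pos h, if_pos h2]; simp
        · have h2 : ¬ m = n - 1 := by omega
          rw [if_neg h, if_neg h2]; simp
      · intro b hb
        rw [if_neg hb, zero_mul]
    have := hmul (fun m => if m = (-1:ℤ) then 1 else 0) (fun m => if m = n then 1 else 0)
      (hdelta_fin _) (hdelta_fin _) (by intro k hk; exact if_neg (by omega))
    rw [hc] at this
    rw [this]
    simp only [mulM, Tmat]
    rw [tsum_eq_single (j + 1)]
    · rw [if_pos (by push_cast; ring), one_mul]
    · intro b hb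
      rw [if_neg (by intro h; apply hb; omega), zero_mul]
  have key : ∀ (n j k : ℕ),
      M (fun m => if m = (n:ℤ) then 1 else 0) (j + n) k = if j = k then 1 else 0 := by
    intro n
    induction n with
    | zero =>
      intro j k
      simpa using congrFun (congrFun hone j) k
    | succ n ih =>
      intro j k
      have h := hshift ((n:ℤ) + 1) (j + n) k
      rw [show ((n:ℤ) + 1) - 1 = (n:ℤ) from by ring, ih j k] at h
      rw [show ((n+1 : ℕ) : ℤ) = (n:ℤ)+1 from by push_cast; ring,
          show j + (n + 1) = (j + n) + 1 from by omega, ← h]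
  constructor
  · intro n i j hnj
    have h := key n (j - n) i
    rw [show j - n + n = j from by omega] at h
    rw [h]
    simp only [Tmat]
    by_cases hji : j - n = i
    · rw [if_pos hji, if_pos (by omega), sub_self]
    · rw [if_neg hji, if_neg (by omega), sub_self]
  · intro i j hj
    have h := key 1 (j - 1) i
    rw [show j - 1 + 1 = j from by omega] at h
    rw [show ((1:ℕ):ℤ) = (1:ℤ) from by norm_num] at h
    rw [h]
    simp only [Tmat]
    by_cases hji : j - 1 = i
    · rw [if_pos hji, if_pos (by omega), sub_self]
    · rw [if_neg hji, if_neg (by omega), sub_self]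
end

section
/- Let a_- and a_0 be invertible symbols in the Wiener algebra with a_- anti-analytic ((a_-)_n = 0 for n > 0, likewise its inverse) and a_0 even (a_0 = ã_0, likewise its inverse). Set M(b) = T(b) + H(b) and a = a_- a_0. Then M(a) is invertible and M(a)^{-1} = M(a_0^{-1}) T(a_-^{-1}). -/
set_option maxHeartbeats 1000000


open Function



variable {a b c : ℤ → ℂ}

lemma MIF_bdd (ha : Summable fun n => ‖a n‖) (n : ℤ) : ‖a n‖ ≤ ∑' m, ‖a m‖ :=
  Summable.le_tsum ha n fun _ _ => norm_nonneg _

lemma MIF_shift (ha : Summable fun n => ‖a n‖) {u : ℕ → ℤ} (hu : Injective u) :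
    Summable fun i : ℕ => ‖a (u i)‖ := ha.comp_injective hu

lemma MIF_tsum_int_split (f : ℤ → ℂ) (hf : Summable fun n => ‖f n‖) (j : ℕ) :
    ∑' m : ℤ, f m = (∑' i : ℕ, f ((j : ℤ) - i)) + ∑' i : ℕ, f ((j : ℤ) + i + 1) := by
  have hg : Summable fun m : ℤ => f ((j : ℤ) - m) :=
    ((Equiv.subLeft (j : ℤ)).summable_iff).2 hf.of_norm
  have h1 : Summable fun i : ℕ => f ((j : ℤ) - i) :=
    hg.comp_injective (fun x y h => by exact_mod_cast h)
  have h2 : Summable fun i : ℕ => f ((j : ℤ) - (-((i : ℤ) + 1))) :=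
    hg.comp_injective (fun x y h => by simpa using h)
  have key : ∑' m : ℤ, f ((j : ℤ) - m)
      = (∑' i : ℕ, f ((j : ℤ) - i)) + ∑' i : ℕ, f ((j : ℤ) - (-((i : ℤ) + 1))) :=
    tsum_of_nat_of_neg_add_one h1 h2
  have e1 : ∑' m : ℤ, f ((j : ℤ) - m) = ∑' m : ℤ, f m := by
    simpa using (Equiv.subLeft (j : ℤ)).tsum_eq f
  rw [← e1, key]
  congr 1



lemma MIF_summable_F2 (hb : Summable fun n => ‖b n‖) (hc : Summable fun n => ‖c n‖) (x y : ℤ) :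
    Summable fun m : ℤ => ‖b m * (c (x - m) + c (y - m))‖ := by
  refine Summable.of_nonneg_of_le (fun _ => norm_nonneg _) (fun m => ?_)
    (hb.mul_right (2 * ∑' n, ‖c n‖))
  rw [norm_mul]
  refine mul_le_mul_of_nonneg_left ?_ (norm_nonneg _)
  calc ‖c (x - m) + c (y - m)‖ ≤ ‖c (x - m)‖ + ‖c (y - m)‖ := norm_add_le _ _
    _ ≤ (∑' n, ‖c n‖) + ∑' n, ‖c n‖ := add_le_add (MIF_bdd hc _) (MIF_bdd hc _)
    _ = 2 * ∑' n, ‖c n‖ := by ring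

lemma MIF_summable_F1 (hb : Summable fun n => ‖b n‖) (hc : Summable fun n => ‖c n‖) (x : ℤ) :
    Summable fun m : ℤ => ‖b m * c (x - m)‖ := by
  refine Summable.of_nonneg_of_le (fun _ => norm_nonneg _) (fun m => ?_)
    (hb.mul_right (∑' n, ‖c n‖))
  rw [norm_mul]
  exact mul_le_mul_of_nonneg_left (MIF_bdd hc _) (norm_nonneg _)

/-- splitting a summable `ℤ`-family times as sum of the conv values. -/
lemma MIF_tsum_F2 (hb : Summable fun n => ‖b n‖) (hc : Summable fun n => ‖c n‖) (x y : ℤ) :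
    ∑' m : ℤ, b m * (c (x - m) + c (y - m)) = conv b c x + conv b c y := by
  have h1 : Summable fun m : ℤ => b m * c (x - m) := (MIF_summable_F1 hb hc x).of_norm
  have h2 : Summable fun m : ℤ => b m * c (y - m) := (MIF_summable_F1 hb hc y).of_norm
  calc ∑' m : ℤ, b m * (c (x - m) + c (y - m))
      = ∑' m : ℤ, (b m * c (x - m) + b m * c (y - m)) := tsum_congr fun m => mul_add _ _ _
    _ = (∑' m : ℤ, b m * c (x - m)) + ∑' m : ℤ, b m * c (y - m) := Summable.tsum_add h1 h2
    _ = conv b c x + conv b c y := rfl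

/-- M(b) M(c) = M(bc) entrywise, when `c` is even. -/
lemma MIF_keyA (hb : Summable fun n => ‖b n‖) (hc : Summable fun n => ‖c n‖)
    (hce : ∀ n : ℤ, c (-n) = c n) (j k : ℕ) :
    ∑' i : ℕ, (b ((j : ℤ) - i) + b ((j : ℤ) + i + 1)) * (c ((i : ℤ) - k) + c ((i : ℤ) + k + 1))
      = conv b c ((j : ℤ) - k) + conv b c ((j : ℤ) + k + 1) := by
  set x : ℤ := (j : ℤ) - k with hx
  set y : ℤ := (j : ℤ) + k + 1 with hy
  set F : ℤ → ℂ := fun m => b m * (c (x - m) + c (y - m)) with hF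
  have hFs : Summable fun m => ‖F m‖ := MIF_summable_F2 hb hc x y
  have hFsum : Summable F := hFs.of_norm
  have hterm : ∀ i : ℕ,
      (b ((j : ℤ) - i) + b ((j : ℤ) + i + 1)) * (c ((i : ℤ) - k) + c ((i : ℤ) + k + 1))
        = F ((j : ℤ) - i) + F ((j : ℤ) + i + 1) := by
    intro i
    have e1 : x - ((j : ℤ) - i) = (i : ℤ) - k := by rw [hx]; ring
    have e2 : y - ((j : ℤ) - i) = (i : ℤ) + k + 1 := by rw [hy]; ring
    have e3 : c (x - ((j : ℤ) + i + 1)) = c ((i : ℤ) + k + 1) := by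
      rw [show x - ((j : ℤ) + i + 1) = -((i : ℤ) + k + 1) by rw [hx]; ring, hce]
    have e4 : c (y - ((j : ℤ) + i + 1)) = c ((i : ℤ) - k) := by
      rw [show y - ((j : ℤ) + i + 1) = -((i : ℤ) - k) by rw [hy]; ring, hce]
    simp only [hF, e1, e2, e3, e4]
    ring
  have MIF_inj1 : Injective fun i : ℕ => (j : ℤ) - i := fun u v h => by
    simp only at h; omega
  have MIF_inj2 : Injective fun i : ℕ => (j : ℤ) + i + 1 := fun u v h => by
    simp only at h; omega
  calc ∑' i : ℕ, (b ((j : ℤ) - i) + b ((j : ℤ) + i + 1)) * (c ((i : ℤ) - k) + c ((i : ℤ) + k + 1))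
      = ∑' i : ℕ, (F ((j : ℤ) - i) + F ((j : ℤ) + i + 1)) := tsum_congr hterm
    _ = (∑' i : ℕ, F ((j : ℤ) - i)) + ∑' i : ℕ, F ((j : ℤ) + i + 1) :=
        Summable.tsum_add (hFsum.comp_injective MIF_inj1) (hFsum.comp_injective MIF_inj2)
    _ = ∑' m : ℤ, F m := (MIF_tsum_int_split F hFs j).symm
    _ = conv b c x + conv b c y := MIF_tsum_F2 hb hc x y



/-- T(b) M(c) = M(bc) entrywise, when `b` is anti-analytic. -/
lemma MIF_keyB (hb : Summable fun n => ‖b n‖) (hc : Summable fun n => ‖c n‖)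
    (hbA : ∀ n : ℤ, 0 < n → b n = 0) (j k : ℕ) :
    ∑' i : ℕ, b ((j : ℤ) - i) * (c ((i : ℤ) - k) + c ((i : ℤ) + k + 1))
      = conv b c ((j : ℤ) - k) + conv b c ((j : ℤ) + k + 1) := by
  set x : ℤ := (j : ℤ) - k with hx
  set y : ℤ := (j : ℤ) + k + 1 with hy
  set F : ℤ → ℂ := fun m => b m * (c (x - m) + c (y - m)) with hF
  have hFs : Summable fun m => ‖F m‖ := MIF_summable_F2 hb hc x y
  have hFsum : Summable F := hFs.of_norm
  have hterm : ∀ i : ℕ, b ((j : ℤ) - i) * (c ((i : ℤ) - k) + c ((i : ℤ) + k + 1))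
      = F ((j : ℤ) - i) := by
    intro i
    have e1 : x - ((j : ℤ) - i) = (i : ℤ) - k := by rw [hx]; ring
    have e2 : y - ((j : ℤ) - i) = (i : ℤ) + k + 1 := by rw [hy]; ring
    simp only [hF, e1, e2]
  have hzero : ∀ i : ℕ, F ((j : ℤ) + i + 1) = 0 := by
    intro i
    simp only [hF, hbA ((j : ℤ) + i + 1) (by omega), zero_mul]
  have MIF_inj1 : Injective fun i : ℕ => (j : ℤ) - i := fun u v h => by
    simp only at h; omega
  calc ∑' i : ℕ, b ((j : ℤ) - i) * (c ((i : ℤ) - k) + c ((i : ℤ) + k + 1))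
      = ∑' i : ℕ, F ((j : ℤ) - i) := tsum_congr hterm
    _ = (∑' i : ℕ, F ((j : ℤ) - i)) + ∑' i : ℕ, F ((j : ℤ) + i + 1) := by
        rw [tsum_congr hzero, tsum_zero, add_zero]
    _ = ∑' m : ℤ, F m := (MIF_tsum_int_split F hFs j).symm
    _ = conv b c x + conv b c y := MIF_tsum_F2 hb hc x y

/-- T(b) T(c) = T(bc) entrywise, when `b` is anti-analytic. -/
lemma MIF_keyC (hb : Summable fun n => ‖b n‖) (hc : Summable fun n => ‖c n‖)
    (hbA : ∀ n : ℤ, 0 < n → b n = 0) (j k : ℕ) :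
    ∑' i : ℕ, b ((j : ℤ) - i) * c ((i : ℤ) - k) = conv b c ((j : ℤ) - k) := by
  set x : ℤ := (j : ℤ) - k with hx
  set F : ℤ → ℂ := fun m => b m * c (x - m) with hF
  have hFs : Summable fun m => ‖F m‖ := MIF_summable_F1 hb hc x
  have hFsum : Summable F := hFs.of_norm
  have hterm : ∀ i : ℕ, b ((j : ℤ) - i) * c ((i : ℤ) - k) = F ((j : ℤ) - i) := by
    intro i
    have e1 : x - ((j : ℤ) - i) = (i : ℤ) - k := by rw [hx]; ring
    simp only [hF, e1]
  have hzero : ∀ i : ℕ, F ((j : ℤ) + i + 1) = 0 := by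
    intro i
    simp only [hF, hbA ((j : ℤ) + i + 1) (by omega), zero_mul]
  calc ∑' i : ℕ, b ((j : ℤ) - i) * c ((i : ℤ) - k)
      = ∑' i : ℕ, F ((j : ℤ) - i) := tsum_congr hterm
    _ = (∑' i : ℕ, F ((j : ℤ) - i)) + ∑' i : ℕ, F ((j : ℤ) + i + 1) := by
        rw [tsum_congr hzero, tsum_zero, add_zero]
    _ = ∑' m : ℤ, F m := (MIF_tsum_int_split F hFs j).symm
    _ = conv b c x := rfl



/-- The equiv `(n, k) ↦ (k, n - k)`. -/
def MIF_eSh : ℤ × ℤ ≃ ℤ × ℤ where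
  toFun p := (p.2, p.1 - p.2)
  invFun p := (p.1 + p.2, p.1)
  left_inv p := by simp
  right_inv p := by simp

lemma MIF_summable_conv_kernel (ha : Summable fun n => ‖a n‖) (hb : Summable fun n => ‖b n‖) :
    Summable fun p : ℤ × ℤ => ‖a p.2‖ * ‖b (p.1 - p.2)‖ := by
  have hp : Summable fun p : ℤ × ℤ => ‖a p.1‖ * ‖b p.2‖ :=
    ha.mul_of_nonneg hb (fun _ => norm_nonneg _) (fun _ => norm_nonneg _)
  exact (MIF_eSh.summable_iff (f := fun p : ℤ × ℤ => ‖a p.1‖ * ‖b p.2‖)).2 hp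

lemma MIF_conv_slice_summable (ha : Summable fun n => ‖a n‖) (hb : Summable fun n => ‖b n‖)
    (n : ℤ) : Summable fun k : ℤ => ‖a k‖ * ‖b (n - k)‖ :=
  (MIF_summable_conv_kernel ha hb).prod_factor n

lemma MIF_conv_norm_summable (ha : Summable fun n => ‖a n‖) (hb : Summable fun n => ‖b n‖) :
    Summable fun n => ‖conv a b n‖ := by
  have hsum : Summable fun n : ℤ => ∑' k : ℤ, ‖a k‖ * ‖b (n - k)‖ :=
    (MIF_summable_conv_kernel ha hb).prod
  refine Summable.of_nonneg_of_le (fun _ => norm_nonneg _) (fun n => ?_) hsum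
  have h1 : Summable fun k : ℤ => ‖a k * b (n - k)‖ := by
    simpa only [norm_mul] using MIF_conv_slice_summable ha hb n
  calc ‖conv a b n‖ ≤ ∑' k : ℤ, ‖a k * b (n - k)‖ := norm_tsum_le_tsum_norm h1
    _ = ∑' k : ℤ, ‖a k‖ * ‖b (n - k)‖ := tsum_congr fun k => norm_mul _ _

lemma MIF_conv_assoc (ha : Summable fun n => ‖a n‖) (hb : Summable fun n => ‖b n‖)
    (hc : Summable fun n => ‖c n‖) (n : ℤ) :
    conv (conv a b) c n = conv a (conv b c) n := by
  set f : ℤ × ℤ → ℂ := fun p => a p.2 * b (p.1 - p.2) * c (n - p.1) with hf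
  have hfn : Summable fun p => ‖f p‖ := by
    refine Summable.of_nonneg_of_le (fun _ => norm_nonneg _) (fun p => ?_)
      ((MIF_summable_conv_kernel ha hb).mul_right (∑' m, ‖c m‖))
    simp only [hf, norm_mul]
    exact mul_le_mul_of_nonneg_left (MIF_bdd hc _) (mul_nonneg (norm_nonneg _) (norm_nonneg _))
  have hfs : Summable f := hfn.of_norm
  have hswap : Summable fun q : ℤ × ℤ => f (q.2, q.1) :=
    ((Equiv.prodComm ℤ ℤ).summable_iff (f := f)).2 hfs
  calc conv (conv a b) c n
      = ∑' m : ℤ, (∑' l : ℤ, a l * b (m - l)) * c (n - m) := rfl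
    _ = ∑' m : ℤ, ∑' l : ℤ, f (m, l) := by
        refine tsum_congr fun m => ?_
        rw [← tsum_mul_right]
    _ = ∑' p : ℤ × ℤ, f p := (Summable.tsum_prod hfs).symm
    _ = ∑' q : ℤ × ℤ, f (q.2, q.1) := by
        rw [← (Equiv.prodComm ℤ ℤ).tsum_eq f]; rfl
    _ = ∑' l : ℤ, ∑' m : ℤ, f (m, l) := Summable.tsum_prod hswap
    _ = ∑' l : ℤ, a l * conv b c (n - l) := by
        refine tsum_congr fun l => ?_
        have h1 : ∑' m : ℤ, f (m, l) = ∑' m : ℤ, a l * (b (m - l) * c (n - m)) :=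
          tsum_congr fun m => by simp only [hf]; ring
        have h2 : ∑' m : ℤ, a l * (b (m - l) * c (n - m))
            = ∑' m : ℤ, a l * (b m * c (n - l - m)) := by
          rw [← (Equiv.addRight l).tsum_eq (fun m => a l * (b (m - l) * c (n - m)))]
          refine tsum_congr fun m => ?_
          simp only [Equiv.coe_addRight, add_sub_cancel_right]
          ring_nf
        rw [h1, h2, tsum_mul_left]
        rfl
    _ = conv a (conv b c) n := rfl

lemma MIF_conv_delta_right (n : ℤ) :
    conv a (fun m => if m = 0 then (1 : ℂ) else 0) n = a n := by
  have : ∀ k : ℤ, k ≠ n → a k * (if n - k = 0 then (1 : ℂ) else 0) = 0 := by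
    intro k hk
    rw [if_neg (by omega), mul_zero]
  rw [conv]
  rw [tsum_eq_single n this]
  simp

lemma MIF_conv_delta_left (n : ℤ) :
    conv (fun m => if m = 0 then (1 : ℂ) else 0) a n = a n := by
  have : ∀ k : ℤ, k ≠ 0 → (if k = 0 then (1 : ℂ) else 0) * a (n - k) = 0 := by
    intro k hk
    rw [if_neg hk, zero_mul]
  rw [conv, tsum_eq_single 0 this]
  simp




set_option maxHeartbeats 1000000 in
lemma MIF_mulM_assoc_pt (A B C : ℕ → ℕ → ℂ) (j k : ℕ)
    (hA : Summable fun i => ‖A j i‖)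
    (hB : ∀ i, Summable fun l => ‖B i l‖)
    (KB KC : ℝ) (hKB : ∀ i, (∑' l, ‖B i l‖) ≤ KB) (hKC : ∀ l, ‖C l k‖ ≤ KC) :
    mulM A (mulM B C) j k = mulM (mulM A B) C j k := by
  have hKC0 : 0 ≤ KC := le_trans (norm_nonneg _) (hKC 0)
  set f : ℕ × ℕ → ℂ := fun p => A j p.1 * (B p.1 p.2 * C p.2 k) with hf
  have hle : ∀ p : ℕ × ℕ, ‖f p‖ ≤ ‖A j p.1‖ * (‖B p.1 p.2‖ * KC) := by
    intro p
    simp only [hf, norm_mul]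
    refine mul_le_mul_of_nonneg_left ?_ (norm_nonneg _)
    exact mul_le_mul_of_nonneg_left (hKC _) (norm_nonneg _)
  have hslice : ∀ i, Summable fun l => ‖f (i, l)‖ := by
    intro i
    refine Summable.of_nonneg_of_le (fun _ => norm_nonneg _) (fun l => hle (i, l)) ?_
    simpa using ((hB i).mul_right KC).mul_left ‖A j i‖
  have hfn : Summable fun p : ℕ × ℕ => ‖f p‖ := by
    refine (summable_prod_of_nonneg (fun _ => norm_nonneg _)).2 ⟨hslice, ?_⟩
    refine Summable.of_nonneg_of_le (fun i => tsum_nonneg fun _ => norm_nonneg _)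
      (fun i => ?_) (hA.mul_right (KB * KC))
    calc ∑' l, ‖f (i, l)‖ ≤ ∑' l, ‖A j i‖ * (‖B i l‖ * KC) :=
          Summable.tsum_le_tsum (fun l => hle (i, l)) (hslice i) (((hB i).mul_right KC).mul_left _)
      _ = ‖A j i‖ * ((∑' l, ‖B i l‖) * KC) := by rw [tsum_mul_left, tsum_mul_right]
      _ ≤ ‖A j i‖ * (KB * KC) := by
          exact mul_le_mul_of_nonneg_left (mul_le_mul_of_nonneg_right (hKB i) hKC0)
            (norm_nonneg _)
  have hfs : Summable f := hfn.of_norm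
  have hswap : Summable fun q : ℕ × ℕ => f (q.2, q.1) :=
    ((Equiv.prodComm ℕ ℕ).summable_iff (f := f)).2 hfs
  calc mulM A (mulM B C) j k
      = ∑' i : ℕ, ∑' l : ℕ, f (i, l) := by
        refine tsum_congr fun i => ?_
        simp only [mulM]
        rw [← tsum_mul_left]
    _ = ∑' p : ℕ × ℕ, f p := (Summable.tsum_prod hfs).symm
    _ = ∑' q : ℕ × ℕ, f (q.2, q.1) := by
        rw [← (Equiv.prodComm ℕ ℕ).tsum_eq f]; rfl
    _ = ∑' l : ℕ, ∑' i : ℕ, f (i, l) := Summable.tsum_prod hswap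
    _ = mulM (mulM A B) C j k := by
        refine tsum_congr fun l => ?_
        simp only [mulM]
        rw [← tsum_mul_right]
        exact tsum_congr fun i => by simp only [hf]; ring





lemma MIF_inj1 (j : ℕ) : Function.Injective fun i : ℕ => (j : ℤ) - i := fun u v h => by
  simp only at h; omega

lemma MIF_inj2 (j : ℕ) : Function.Injective fun i : ℕ => (j : ℤ) + i + 1 := fun u v h => by
  simp only at h; omega

lemma MIF_row_le (hc : Summable fun n => ‖c n‖) {u : ℕ → ℤ} (hu : Function.Injective u) :
    (∑' i : ℕ, ‖c (u i)‖) ≤ ∑' n, ‖c n‖ :=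
  Summable.tsum_le_tsum_of_inj u hu (fun _ _ => norm_nonneg _) (fun _ => le_rfl) (MIF_shift hc hu) hc

lemma MIF_rowM (ha : Summable fun n => ‖a n‖) (j : ℕ) :
    Summable fun i : ℕ => ‖a ((j : ℤ) - i) + a ((j : ℤ) + i + 1)‖ :=
  Summable.of_nonneg_of_le (fun _ => norm_nonneg _) (fun i => norm_add_le _ _)
    ((MIF_shift ha (MIF_inj1 j)).add (MIF_shift ha (MIF_inj2 j)))

lemma MIF_rowM_le (ha : Summable fun n => ‖a n‖) (i : ℕ) :
    (∑' l : ℕ, ‖a ((i : ℤ) - l) + a ((i : ℤ) + l + 1)‖) ≤ 2 * ∑' n, ‖a n‖ := by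
  calc (∑' l : ℕ, ‖a ((i : ℤ) - l) + a ((i : ℤ) + l + 1)‖)
      ≤ ∑' l : ℕ, (‖a ((i : ℤ) - l)‖ + ‖a ((i : ℤ) + l + 1)‖) :=
        Summable.tsum_le_tsum (fun l => norm_add_le _ _) (MIF_rowM ha i)
          ((MIF_shift ha (MIF_inj1 i)).add (MIF_shift ha (MIF_inj2 i)))
    _ = (∑' l : ℕ, ‖a ((i : ℤ) - l)‖) + ∑' l : ℕ, ‖a ((i : ℤ) + l + 1)‖ :=
        Summable.tsum_add (MIF_shift ha (MIF_inj1 i)) (MIF_shift ha (MIF_inj2 i))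
    _ ≤ (∑' n, ‖a n‖) + ∑' n, ‖a n‖ :=
        add_le_add (MIF_row_le ha (MIF_inj1 i)) (MIF_row_le ha (MIF_inj2 i))
    _ = 2 * ∑' n, ‖a n‖ := by ring

lemma MIF_entry_le (ha : Summable fun n => ‖a n‖) (x y : ℤ) :
    ‖a x + a y‖ ≤ 2 * ∑' n, ‖a n‖ := by
  calc ‖a x + a y‖ ≤ ‖a x‖ + ‖a y‖ := norm_add_le _ _
    _ ≤ (∑' n, ‖a n‖) + ∑' n, ‖a n‖ := add_le_add (MIF_bdd ha _) (MIF_bdd ha _)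
    _ = 2 * ∑' n, ‖a n‖ := by ring



/-- Let `a₋` be invertible in the anti-analytic Wiener algebra (inverse `c₋`), `a₀`
invertible among even Wiener symbols (inverse `c₀`), and set `M(b) = T(b) + H(b)`,
`a = a₋ a₀`. Then `M(a)` is invertible and `M(a)⁻¹ = M(a₀⁻¹)T(a₋⁻¹)`. -/
theorem M_inverse_formula (am cm a0 c0 : ℤ → ℂ)
    (ham : Summable fun n => ‖am n‖) (hcm : Summable fun n => ‖cm n‖)
    (ha0 : Summable fun n => ‖a0 n‖) (hc0 : Summable fun n => ‖c0 n‖)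
    (hamA : ∀ n : ℤ, 0 < n → am n = 0) (hcmA : ∀ n : ℤ, 0 < n → cm n = 0)
    (ha0e : ∀ n : ℤ, a0 (-n) = a0 n) (hc0e : ∀ n : ℤ, c0 (-n) = c0 n)
    (h1 : ∀ n : ℤ, conv am cm n = if n = 0 then 1 else 0)
    (h2 : ∀ n : ℤ, conv cm am n = if n = 0 then 1 else 0)
    (h3 : ∀ n : ℤ, conv a0 c0 n = if n = 0 then 1 else 0)
    (h4 : ∀ n : ℤ, conv c0 a0 n = if n = 0 then 1 else 0) :
    (∀ j k : ℕ,
      mulM (fun j k => Tmat (conv am a0) j k + Hmat (conv am a0) j k)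
        (mulM (fun j k => Tmat c0 j k + Hmat c0 j k) (Tmat cm)) j k
        = if j = k then 1 else 0) ∧
    (∀ j k : ℕ,
      mulM (mulM (fun j k => Tmat c0 j k + Hmat c0 j k) (Tmat cm))
        (fun j k => Tmat (conv am a0) j k + Hmat (conv am a0) j k) j k
        = if j = k then 1 else 0) := by
  have ha : Summable fun n => ‖conv am a0 n‖ := MIF_conv_norm_summable ham ha0
  set a : ℤ → ℂ := conv am a0 with hadef
  set A : ℕ → ℕ → ℂ := fun j k => a ((j : ℤ) - (k : ℤ)) + a ((j : ℤ) + (k : ℤ) + 1) with hA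
  set B : ℕ → ℕ → ℂ := fun j k => c0 ((j : ℤ) - (k : ℤ)) + c0 ((j : ℤ) + (k : ℤ) + 1) with hB
  set C : ℕ → ℕ → ℂ := Tmat cm with hC
  -- conv identities
  have hac0 : ∀ n : ℤ, conv a c0 n = am n := by
    intro n
    rw [hadef, MIF_conv_assoc ham ha0 hc0 n, funext h3]
    exact MIF_conv_delta_right n
  have hcma : ∀ n : ℤ, conv cm a n = a0 n := by
    intro n
    rw [hadef, ← MIF_conv_assoc hcm ham ha0 n, funext h2]
    exact MIF_conv_delta_left n
  -- step 1 : A * B = T(am)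
  have hAB : ∀ j k : ℕ, mulM A B j k = am ((j : ℤ) - k) := by
    intro j k
    have h := MIF_keyA (b := a) (c := c0) ha hc0 hc0e j k
    have : mulM A B j k = conv a c0 ((j : ℤ) - k) + conv a c0 ((j : ℤ) + k + 1) := h
    rw [this, hac0, hac0, hamA ((j : ℤ) + k + 1) (by omega), add_zero]
  -- step 2 : C * A = M(a0)
  have hCA : ∀ i k : ℕ, mulM C A i k = a0 ((i : ℤ) - k) + a0 ((i : ℤ) + k + 1) := by
    intro i k
    have h := MIF_keyB (b := cm) (c := a) hcm ha hcmA i k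
    have : mulM C A i k = conv cm a ((i : ℤ) - k) + conv cm a ((i : ℤ) + k + 1) := h
    rw [this, hcma, hcma]
  simp only [Tmat, Hmat, ← hA, ← hB, ← hC, ← hadef]
  have hrowA : ∀ j : ℕ, Summable fun i : ℕ => ‖A j i‖ := fun j => MIF_rowM ha j
  have hrowB : ∀ j : ℕ, Summable fun i : ℕ => ‖B j i‖ := fun j => MIF_rowM hc0 j
  have hrowC : ∀ j : ℕ, Summable fun i : ℕ => ‖C j i‖ := fun j => MIF_shift hcm (MIF_inj1 j)
  have hKB : ∀ i : ℕ, (∑' l : ℕ, ‖B i l‖) ≤ 2 * ∑' n, ‖c0 n‖ := fun i => MIF_rowM_le hc0 i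
  have hKC : ∀ i : ℕ, (∑' l : ℕ, ‖C i l‖) ≤ ∑' n, ‖cm n‖ := fun i => MIF_row_le hcm (MIF_inj1 i)
  have hCbd : ∀ l k : ℕ, ‖C l k‖ ≤ ∑' n, ‖cm n‖ := fun l k => MIF_bdd hcm _
  have hAbd : ∀ l k : ℕ, ‖A l k‖ ≤ 2 * ∑' n, ‖a n‖ := fun l k => MIF_entry_le ha _ _
  constructor
  · intro j k
    rw [MIF_mulM_assoc_pt A B C j k (hrowA j) hrowB
      (2 * ∑' n, ‖c0 n‖) (∑' n, ‖cm n‖) hKB (fun l => hCbd l k)]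
    have : mulM (mulM A B) C j k = ∑' i : ℕ, am ((j : ℤ) - i) * cm ((i : ℤ) - k) := by
      refine tsum_congr fun i => ?_
      rw [hAB j i, hC]
      rfl
    rw [this, MIF_keyC ham hcm hamA j k, h1]
    by_cases h : j = k
    · rw [if_pos (show ((j : ℤ) - k = 0) by omega), if_pos h]
    · rw [if_neg (show ¬((j : ℤ) - k = 0) by omega), if_neg h]
  · intro j k
    rw [← MIF_mulM_assoc_pt B C A j k (hrowB j) hrowC
      (∑' n, ‖cm n‖) (2 * ∑' n, ‖a n‖) hKC (fun l => hAbd l k)]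
    have : mulM B (mulM C A) j k
        = ∑' i : ℕ, (c0 ((j : ℤ) - i) + c0 ((j : ℤ) + i + 1))
            * (a0 ((i : ℤ) - k) + a0 ((i : ℤ) + k + 1)) := by
      refine tsum_congr fun i => ?_
      rw [hCA i k]
    rw [this, MIF_keyA hc0 ha0 ha0e j k, h4, h4,
      if_neg (show ¬((j : ℤ) + k + 1 = 0) by omega), add_zero]
    by_cases h : j = k
    · rw [if_pos (show ((j : ℤ) - k = 0) by omega), if_pos h]
    · rw [if_neg (show ¬((j : ℤ) - k = 0) by omega), if_neg h]
end
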